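/- Fix integers 0 ≤ k < n, let 0 < δ < 1 with 1/δ ∈ ℕ, z ∈ ℤⁿ, ρ ∈ Γ, and let 1 < p < ∞ with p' ∈ ℕ. Let w be a weight with [w]_{A^{S_k}_{p,ρ,z}} < ∞, where the face selection is the one produced by the face-selection algorithm (so that every affine k-plane parallel to a coordinate k-plane contains at most C_{n,k}·u^{1−(n−k)(2n−1)/(2n²)} of the chosen faces, with u = δ^{−n}). Then there is a constant C(k,n), depending only on k and n, such that ‖\tilde M^k_{ρ,δ} f‖_{L^p(Q_z,w)} ≤ C(k,n)·δ^{(1/p)((n−k)(2n−1)/(2n) − n)}·[w]_{A^{S_k}_{p,ρ,z}}^{1/p}·‖f‖_{L^p(7Q_z,w)} for all f. -/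

import Mathlib

/-!
On the cell `Q_z(m)` the operator is the average of `f` over `ℓ_m`, so Hölder's inequality with
the weight `w` gives `|⨍_{ℓ_m} f|^p w(Q_z(m)) ≤ [w]_{A^{S_k}_{p,ρ,z}} ∫_{ℓ_m} |f|^p w`. Summing
over the cells, it remains to bound the overlap of the sets `ℓ_m ⊆ 7Q_z`. If `y ∈ ℓ_m`, every
fixed coordinate of the face `l_m` lies within `δ` of the corresponding coordinate of `y` and on
the lattice `z + (δ/2)ℤ`. Sorting these faces by their free coordinates and the offsets of their
fixed coordinates leaves at most `18ⁿ` classes, each contained in a single affine `k`-plane and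
hence of size at most `A u^{1-(n-k)(2n-1)/(2n²)}`; with `u = δ^{-n}` this overlap produces the
power of `δ` in the bound.
-/

open MeasureTheory Metric Set
open scoped ENNReal NNReal

noncomputable section

/-- Index of a `k`-face of an axis-parallel cube in `ℝⁿ`: a set of `k` "free" coordinates
together with a sign choice for the remaining coordinates (only the signs of coordinates
outside the free set matter). -/
abbrev FaceIdx (n k : ℕ) := {T : Finset (Fin n) // T.card = k} × (Fin n → Bool)

/-- The `k`-face of the axis-parallel cube centered at `x` with side length `2 r`
corresponding to the face index `F`. -/
def kFace {n : ℕ} (k : ℕ) (x : Fin n → ℝ) (r : ℝ) (F : FaceIdx n k) : Set (Fin n → ℝ) :=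
  {y | (∀ i ∈ F.1.1, |y i - x i| ≤ r) ∧ ∀ i ∉ F.1.1, y i = x i + (if F.2 i then r else -r)}

/-- The `δ`-neighborhood of a `k`-face. -/
def faceNbhd {n : ℕ} (k : ℕ) (δ : ℝ) (x : Fin n → ℝ) (r : ℝ) (F : FaceIdx n k) :
    Set (Fin n → ℝ) :=
  Metric.cthickening δ (kFace k x r F)

/-- The `δ`-neighborhood of the whole `k`-skeleton. -/
def skelNbhd {n : ℕ} (k : ℕ) (δ : ℝ) (x : Fin n → ℝ) (r : ℝ) : Set (Fin n → ℝ) :=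
  ⋃ F : FaceIdx n k, faceNbhd k δ x r F

/-- The `k`-skeleton maximal function with width `δ` (with values in `ℝ≥0∞`):
`M^k_δ f (x) = sup_{1 ≤ r ≤ 2} min_j ⨍_{S^j_{k,δ}(x,r)} |f|`. -/
def skelMax (n k : ℕ) (δ : ℝ) (f : (Fin n → ℝ) → ℝ) (x : Fin n → ℝ) : ℝ≥0∞ :=
  ⨆ r ∈ Set.Icc (1 : ℝ) 2, ⨅ F : FaceIdx n k,
    (volume (faceNbhd k δ x r F))⁻¹ * ∫⁻ y in faceNbhd k δ x r F, (‖f y‖₊ : ℝ≥0∞)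

/-- `L^p` norm of an `ℝ≥0∞`-valued function. -/
def lpNormE {α : Type*} [MeasurableSpace α] (g : α → ℝ≥0∞) (p : ℝ) (μ : Measure α) : ℝ≥0∞ :=
  (∫⁻ x, g x ^ p ∂μ) ^ (1 / p)

/-- The measure `w(x) dx` associated to a weight `w`. -/
def wMeasure {n : ℕ} (w : (Fin n → ℝ) → ℝ) : Measure (Fin n → ℝ) :=
  volume.withDensity fun x => ENNReal.ofReal (w x)

/-- Average of `g` over the set `A` (with respect to Lebesgue measure). -/
def ravg {n : ℕ} (A : Set (Fin n → ℝ)) (g : (Fin n → ℝ) → ℝ) : ℝ :=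
  (volume A).toReal⁻¹ * ∫ y in A, g y

/-- The axis-parallel cube with center `c` and side length `s`. -/
def cube {n : ℕ} (c : Fin n → ℝ) (s : ℝ) : Set (Fin n → ℝ) :=
  {y | ∀ j, |y j - c j| ≤ s / 2}

/-- The closed unit cube `Q_z` with lower-left vertex `z`. -/
def unitCube {n : ℕ} (z : Fin n → ℤ) : Set (Fin n → ℝ) :=
  {y | ∀ j, (z j : ℝ) ≤ y j ∧ y j ≤ (z j : ℝ) + 1}

/-- The cube `7 Q_z`: same center as `Q_z`, side length `7`. -/
def sevenCube {n : ℕ} (z : Fin n → ℤ) : Set (Fin n → ℝ) :=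
  {y | ∀ j, |y j - ((z j : ℝ) + 1 / 2)| ≤ 7 / 2}

/-- The (half-open) grid cell `Q_z(m)` of side length `δ = 1/N` inside `Q_z`. -/
def gridCell {n : ℕ} (N : ℕ) (z : Fin n → ℤ) (m : Fin n → Fin N) : Set (Fin n → ℝ) :=
  {y | ∀ j, (z j : ℝ) + (m j : ℝ) / N ≤ y j ∧ y j < (z j : ℝ) + ((m j : ℝ) + 1) / N}

/-- The center `x_m` of the grid cell `Q_z(m)`. -/
def gridCenter {n : ℕ} (N : ℕ) (z : Fin n → ℤ) (m : Fin n → Fin N) : Fin n → ℝ :=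
  fun j => (z j : ℝ) + ((m j : ℝ) + 1 / 2) / N

/-- Membership in `Γ`: a radius function with values in `[1,2] ∩ δ ℤ`, `δ = 1/N`. -/
def inGamma {n : ℕ} (N : ℕ) (ρ : (Fin n → Fin N) → ℝ) : Prop :=
  ∀ m, ρ m ∈ Set.Icc (1 : ℝ) 2 ∧ ∃ t : ℤ, ρ m = (t : ℝ) / N

/-- The `δ'`-neighborhood `ℓ_m` of the selected `k`-face of the skeleton
`S_k(x_m, ρ(x_m))`. -/
def selFace {n : ℕ} (k N : ℕ) (z : Fin n → ℤ) (ρ : (Fin n → Fin N) → ℝ)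
    (sel : (Fin n → Fin N) → FaceIdx n k) (δ' : ℝ) (m : Fin n → Fin N) : Set (Fin n → ℝ) :=
  Metric.cthickening δ' (kFace k (gridCenter N z m) (ρ m) (sel m))

/-- The linearized `k`-skeleton maximal operator: on the cell `Q_z(m)` it equals the
average of `f` over the `δ'`-neighborhood of the selected face. -/
def linMax {n : ℕ} (k N : ℕ) (z : Fin n → ℤ) (ρ : (Fin n → Fin N) → ℝ)
    (sel : (Fin n → Fin N) → FaceIdx n k) (δ' : ℝ) (f : (Fin n → ℝ) → ℝ)
    (x : Fin n → ℝ) : ℝ :=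
  ∑ m : Fin n → Fin N, Set.indicator (gridCell N z m)
    (fun _ => (volume (selFace k N z ρ sel δ' m)).toReal⁻¹ *
      ∫ y in selFace k N z ρ sel δ' m, f y) x

/-- The local skeleton `A_p` constant `[w]_{A^{S_k}_{p,ρ,z}}` (for `1 < p < ∞`). -/
def ApLoc {n : ℕ} (k N : ℕ) (z : Fin n → ℤ) (ρ : (Fin n → Fin N) → ℝ)
    (sel : (Fin n → Fin N) → FaceIdx n k) (w : (Fin n → ℝ) → ℝ) (p : ℝ) : ℝ≥0∞ :=
  ⨆ m : Fin n → Fin N,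
    ((volume (selFace k N z ρ sel ((N : ℝ)⁻¹) m))⁻¹ *
        ∫⁻ y in gridCell N z m, ENNReal.ofReal (w y)) *
      ((volume (selFace k N z ρ sel ((N : ℝ)⁻¹) m))⁻¹ *
        ∫⁻ y in selFace k N z ρ sel ((N : ℝ)⁻¹) m,
          ENNReal.ofReal (w y) ^ (1 - p / (p - 1))) ^ (p - 1)

/-- The local skeleton `A_1` constant `[w]_{A^{S_k}_{1,ρ,z}}`. -/
def A1Loc {n : ℕ} (k N : ℕ) (z : Fin n → ℤ) (ρ : (Fin n → Fin N) → ℝ)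
    (sel : (Fin n → Fin N) → FaceIdx n k) (w : (Fin n → ℝ) → ℝ) : ℝ≥0∞ :=
  ⨆ m : Fin n → Fin N,
    ((volume (selFace k N z ρ sel ((N : ℝ)⁻¹) m))⁻¹ *
        ∫⁻ y in gridCell N z m, ENNReal.ofReal (w y)) *
      essSup (fun y => (ENNReal.ofReal (w y))⁻¹)
        (volume.restrict (selFace k N z ρ sel ((N : ℝ)⁻¹) m))

/-- The global skeleton `A_p` constant `[w]_{A^{S_k}_p}` (with the `A_1` version at `p = 1`). -/
def ApGlobal {n : ℕ} (k N : ℕ)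
    (sel : (Fin n → ℤ) → ((Fin n → Fin N) → ℝ) → (Fin n → Fin N) → FaceIdx n k)
    (w : (Fin n → ℝ) → ℝ) (p : ℝ) : ℝ≥0∞ :=
  if p = 1 then
    ⨆ z : Fin n → ℤ, ⨆ ρ : {ρ : (Fin n → Fin N) → ℝ // inGamma N ρ},
      A1Loc k N z ρ.1 (sel z ρ.1) w
  else
    ⨆ z : Fin n → ℤ, ⨆ ρ : {ρ : (Fin n → Fin N) → ℝ // inGamma N ρ},
      ApLoc k N z ρ.1 (sel z ρ.1) w p

section WeightedHolder

variable {α : Type*} [MeasurableSpace α] {μ : Measure α} {p : ℝ}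

theorem lintegral_rpow_le_lintegral_rpow_mul_weight (hp : 1 < p) {g W : α → ℝ≥0∞}
    (hg : AEMeasurable g μ) (hW : AEMeasurable W μ) (hW_top : ∀ᵐ x ∂μ, W x ≠ ⊤)
    (hW_zero : ∀ᵐ x ∂μ, W x ≠ 0) :
    (∫⁻ x, g x ∂μ) ^ p ≤
      (∫⁻ x, g x ^ p * W x ∂μ) * (∫⁻ x, W x ^ (1 - p / (p - 1)) ∂μ) ^ (p - 1) := by
  set q := p / (p - 1)
  have hpq : p.HolderConjugate q := .conjExponent hp
  have hp0 : 0 < p := hpq.pos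
  have hsplit : ∀ᵐ x ∂μ, g x = (g x * W x ^ (1 / p)) * W x ^ (-(1 / p)) := by
    filter_upwards [hW_zero, hW_top] with x h0 htop
    rw [ENNReal.rpow_neg, mul_assoc, ENNReal.mul_inv_cancel (by simp [h0, htop])
      (by simp [h0, htop]), mul_one]
  have hfirst : ∀ x, (g x * W x ^ (1 / p)) ^ p = g x ^ p * W x := fun x => by
    rw [ENNReal.mul_rpow_of_nonneg _ _ hp0.le, ← ENNReal.rpow_mul, one_div_mul_cancel hp0.ne',
      ENNReal.rpow_one]
  have hsecond : ∀ x, (W x ^ (-(1 / p))) ^ q = W x ^ (1 - q) := fun x => by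
    rw [← ENNReal.rpow_mul]
    congr 1
    simp only [q]
    field_simp [hpq.sub_one_ne_zero]
    ring
  have hexp : 1 / q * p = p - 1 := by
    simp only [q]
    field_simp [hpq.sub_one_ne_zero]
  calc (∫⁻ x, g x ∂μ) ^ p
      = (∫⁻ x, (g x * W x ^ (1 / p)) * W x ^ (-(1 / p)) ∂μ) ^ p := by
        rw [lintegral_congr_ae hsplit]
    _ ≤ ((∫⁻ x, (g x * W x ^ (1 / p)) ^ p ∂μ) ^ (1 / p) *
          (∫⁻ x, (W x ^ (-(1 / p))) ^ q ∂μ) ^ (1 / q)) ^ p :=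
        ENNReal.rpow_le_rpow (ENNReal.lintegral_mul_le_Lp_mul_Lq μ hpq
          (hg.mul (hW.pow_const _)) (hW.pow_const _)) hp0.le
    _ = _ := by
        rw [ENNReal.mul_rpow_of_nonneg _ _ hp0.le, ← ENNReal.rpow_mul, ← ENNReal.rpow_mul,
          one_div_mul_cancel hp0.ne', ENNReal.rpow_one, hexp]
        simp only [hfirst, hsecond]

theorem enorm_integral_rpow_le_lintegral_rpow_mul_weight (hp : 1 < p) {W : α → ℝ≥0∞}
    (hW : AEMeasurable W μ) (hW_top : ∀ᵐ x ∂μ, W x ≠ ⊤)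
    (hW_dual : ∫⁻ x, W x ^ (1 - p / (p - 1)) ∂μ ≠ ⊤) (f : α → ℝ) :
    ‖∫ x, f x ∂μ‖ₑ ^ p ≤
      (∫⁻ x, ‖f x‖ₑ ^ p * W x ∂μ) * (∫⁻ x, W x ^ (1 - p / (p - 1)) ∂μ) ^ (p - 1) := by
  by_cases hf : Integrable f μ
  · have hW_zero : ∀ᵐ x ∂μ, W x ≠ 0 := by
      have hneg : 1 - p / (p - 1) < 0 := by
        rw [sub_neg, one_lt_div (by linarith)]; linarith
      filter_upwards [ae_lt_top' (hW.pow_const _) hW_dual] with x hx h0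
      simp [h0, ENNReal.zero_rpow_of_neg hneg] at hx
    calc ‖∫ x, f x ∂μ‖ₑ ^ p ≤ (∫⁻ x, ‖f x‖ₑ ∂μ) ^ p :=
          ENNReal.rpow_le_rpow (enorm_integral_le_lintegral_enorm f) (by linarith)
      _ ≤ _ := lintegral_rpow_le_lintegral_rpow_mul_weight hp hf.aestronglyMeasurable.enorm hW
          hW_top hW_zero
  · simp [integral_undef hf, ENNReal.zero_rpow_of_pos (by linarith : 0 < p)]

theorem enorm_setAverage_rpow_mul_le (hp : 1 < p) {E Q : Set α} (hE_zero : μ E ≠ 0)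
    (hE_top : μ E ≠ ⊤) {W : α → ℝ≥0∞} (hW : AEMeasurable W (μ.restrict E))
    (hW_top : ∀ᵐ x ∂μ.restrict E, W x ≠ ⊤) (f : α → ℝ)
    (hApW : ((μ E)⁻¹ * ∫⁻ x in Q, W x ∂μ) *
      ((μ E)⁻¹ * ∫⁻ x in E, W x ^ (1 - p / (p - 1)) ∂μ) ^ (p - 1) ≠ ⊤) :
    ‖(μ E).toReal⁻¹ * ∫ x in E, f x ∂μ‖ₑ ^ p * ∫⁻ x in Q, W x ∂μ ≤
      ((μ E)⁻¹ * ∫⁻ x in Q, W x ∂μ) *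
        ((μ E)⁻¹ * ∫⁻ x in E, W x ^ (1 - p / (p - 1)) ∂μ) ^ (p - 1) *
        ∫⁻ x in E, ‖f x‖ₑ ^ p * W x ∂μ := by
  set V := μ E
  set WQ := ∫⁻ x in Q, W x ∂μ
  set B := ∫⁻ x in E, W x ^ (1 - p / (p - 1)) ∂μ
  have hp1 : 0 < p - 1 := by linarith
  have hV_inv : V⁻¹ ≠ 0 := ENNReal.inv_ne_zero.mpr hE_top
  by_cases hB : B = ⊤
  · have hWQ : WQ = 0 := by
      by_contra hWQ
      apply hApW
      rw [hB, ENNReal.mul_top hV_inv, ENNReal.top_rpow_of_pos hp1,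
        ENNReal.mul_top (mul_ne_zero hV_inv hWQ)]
    simp [hWQ]
  have hV_rpow : V⁻¹ ^ p = V⁻¹ * V⁻¹ ^ (p - 1) := by
    simpa using ENNReal.rpow_add_of_nonneg (x := V⁻¹) 1 (p - 1) zero_le_one hp1.le
  calc ‖V.toReal⁻¹ * ∫ x in E, f x ∂μ‖ₑ ^ p * WQ
      = V⁻¹ ^ p * ‖∫ x in E, f x ∂μ‖ₑ ^ p * WQ := by
        rw [enorm_mul, ← ENNReal.toReal_inv, Real.enorm_toReal (ENNReal.inv_ne_top.mpr hE_zero),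
          ENNReal.mul_rpow_of_nonneg _ _ (by linarith)]
    _ ≤ V⁻¹ ^ p * ((∫⁻ x in E, ‖f x‖ₑ ^ p * W x ∂μ) * B ^ (p - 1)) * WQ := by
        gcongr
        exact enorm_integral_rpow_le_lintegral_rpow_mul_weight hp hW hW_top hB f
    _ = (V⁻¹ * WQ) * (V⁻¹ * B) ^ (p - 1) * ∫⁻ x in E, ‖f x‖ₑ ^ p * W x ∂μ := by
        rw [hV_rpow, ENNReal.mul_rpow_of_nonneg _ _ hp1.le]
        ring

end WeightedHolder

section FiniteFamilies

open Function

theorem apply_sum_indicator_of_pairwise_disjoint {α ι β γ : Type*} [Fintype ι]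
    [AddCommMonoid β] [AddCommMonoid γ] {E : ι → Set α} (hE : Pairwise (Disjoint on E))
    (c : ι → β) {g : β → γ} (hg : g 0 = 0) (x : α) :
    g (∑ i, (E i).indicator (fun _ => c i) x) = ∑ i, (E i).indicator (fun _ => g (c i)) x := by
  by_cases hx : ∃ i, x ∈ E i
  · obtain ⟨i, hi⟩ := hx
    have hj : ∀ j ≠ i, x ∉ E j := fun j hji hj => Set.disjoint_left.mp (hE hji) hj hi
    simp only [Finset.sum_eq_single_of_mem i (Finset.mem_univ i)
      fun j _ hji => Set.indicator_of_notMem (hj j hji) _, Set.indicator_of_mem hi]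
  · push Not at hx
    simp [Set.indicator_of_notMem (hx _), hg]

variable {α ι : Type*} [MeasurableSpace α] {μ : Measure α} [Fintype ι] {E : ι → Set α}

theorem sum_restrict_le_smul_of_ncard_le (hE : ∀ i, MeasurableSet (E i)) {K : ℕ}
    (hK : ∀ x, {i | x ∈ E i}.ncard ≤ K) : ∑ i, μ.restrict (E i) ≤ (K : ℝ≥0∞) • μ := by
  classical
  refine Measure.le_iff.2 fun s hs => ?_
  have hpt : ∀ x, ∑ i, (s ∩ E i).indicator 1 x ≤ s.indicator (fun _ => (K : ℝ≥0∞)) x := by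
    intro x
    by_cases hx : x ∈ s
    · simp only [Set.indicator_apply, Set.mem_inter_iff, hx, true_and, if_true, Pi.one_apply,
        Finset.sum_boole]
      have hKx := hK x
      rw [Set.ncard_eq_toFinset_card', Set.toFinset_ofPred] at hKx
      exact_mod_cast hKx
    · simp [hx]
  calc (∑ i, μ.restrict (E i)) s = ∑ i, ∫⁻ x, (s ∩ E i).indicator 1 x ∂μ := by
        simp [Measure.restrict_apply hs, lintegral_indicator_one (hs.inter (hE _))]
    _ = ∫⁻ x, ∑ i, (s ∩ E i).indicator 1 x ∂μ :=
        (lintegral_finsetSum _ fun i _ => measurable_one.indicator (hs.inter (hE i))).symm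
    _ ≤ ∫⁻ x, s.indicator (fun _ => (K : ℝ≥0∞)) x ∂μ := lintegral_mono hpt
    _ = ((K : ℝ≥0∞) • μ) s := by simp [lintegral_indicator_const hs]

theorem sum_setLIntegral_le_mul_lintegral_of_ncard_le (hE : ∀ i, MeasurableSet (E i)) {K : ℕ}
    (hK : ∀ x, {i | x ∈ E i}.ncard ≤ K) (g : α → ℝ≥0∞) :
    ∑ i, ∫⁻ x in E i, g x ∂μ ≤ K * ∫⁻ x, g x ∂μ :=
  calc ∑ i, ∫⁻ x in E i, g x ∂μ = ∫⁻ x, g x ∂(∑ i, μ.restrict (E i)) :=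
        (lintegral_finsetSum_measure _ _ _).symm
    _ ≤ ∫⁻ x, g x ∂((K : ℝ≥0∞) • μ) :=
        lintegral_mono' (sum_restrict_le_smul_of_ncard_le hE hK) le_rfl
    _ = K * ∫⁻ x, g x ∂μ := lintegral_smul_measure _ _

theorem lintegral_enorm_rpow_sum_indicator_const {β : Type*} [NormedAddCommGroup β] {p : ℝ}
    (hp : 0 < p) (hE_meas : ∀ i, MeasurableSet (E i)) (hE : Pairwise (Disjoint on E))
    (c : ι → β) :
    ∫⁻ x, ‖∑ i, (E i).indicator (fun _ => c i) x‖ₑ ^ p ∂μ = ∑ i, ‖c i‖ₑ ^ p * μ (E i) := by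
  simp_rw [apply_sum_indicator_of_pairwise_disjoint hE c (g := fun b => ‖b‖ₑ ^ p)
    (by simp [ENNReal.zero_rpow_of_pos hp])]
  rw [lintegral_finsetSum _ fun i _ => measurable_const.indicator (hE_meas i)]
  simp [lintegral_indicator_const (hE_meas _)]

end FiniteFamilies

section Geometry

open Function

variable {n k N : ℕ}

theorem kFace_nonempty (x : Fin n → ℝ) {r : ℝ} (hr : 0 ≤ r) (F : FaceIdx n k) :
    (kFace k x r F).Nonempty :=
  ⟨fun i => if i ∈ F.1.1 then x i else x i + (if F.2 i then r else -r),
    fun i hi => by simp [hi, hr], fun i hi => by simp [hi]⟩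

theorem kFace_subset_closedBall (x : Fin n → ℝ) {r : ℝ} (hr : 0 ≤ r) (F : FaceIdx n k) :
    kFace k x r F ⊆ closedBall x r := by
  rintro y ⟨hfree, hfixed⟩
  refine (mem_closedBall.2 <| (dist_pi_le_iff hr).2 fun i => ?_)
  rw [Real.dist_eq]
  by_cases hi : i ∈ F.1.1
  · exact hfree i hi
  · rw [hfixed i hi]
    split <;> simp [abs_of_nonneg hr]

theorem measurableSet_gridCell (z : Fin n → ℤ) (m : Fin n → Fin N) :
    MeasurableSet (gridCell N z m) := by
  simp only [gridCell, Set.ofPred_forall]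
  exact .iInter fun j => (measurableSet_le measurable_const (measurable_pi_apply j)).inter
    (measurableSet_lt (measurable_pi_apply j) measurable_const)

theorem pairwise_disjoint_gridCell (z : Fin n → ℤ) :
    Pairwise (Disjoint on gridCell N z) := by
  intro m m' hmm'
  refine Set.disjoint_left.2 fun y hy hy' => hmm' (funext fun j => ?_)
  have hN : (0 : ℝ) < N := by exact_mod_cast (m j).pos
  have hle : ∀ a b : Fin N, (z j : ℝ) + (a : ℝ) / N ≤ y j →
      y j < (z j : ℝ) + ((b : ℝ) + 1) / N → (a : ℕ) ≤ b := fun a b ha hb => by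
    have hab : (a : ℝ) < b + 1 := by
      rw [← div_lt_div_iff_of_pos_right hN]; linarith
    exact_mod_cast Nat.lt_succ_iff.1 (by exact_mod_cast hab)
  exact Fin.ext (le_antisymm (hle _ _ (hy j).1 (hy' j).2) (hle _ _ (hy' j).1 (hy j).2))

theorem measurableSet_selFace (z : Fin n → ℤ) (ρ : (Fin n → Fin N) → ℝ)
    (sel : (Fin n → Fin N) → FaceIdx n k) (δ' : ℝ) (m : Fin n → Fin N) :
    MeasurableSet (selFace k N z ρ sel δ' m) :=
  isClosed_cthickening.measurableSet

theorem volume_selFace_ne_zero (z : Fin n → ℤ) {ρ : (Fin n → Fin N) → ℝ} (hρ : ∀ m, 0 ≤ ρ m)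
    (sel : (Fin n → Fin N) → FaceIdx n k) {δ' : ℝ} (hδ' : 0 < δ') (m : Fin n → Fin N) :
    volume (selFace k N z ρ sel δ' m) ≠ 0 := by
  obtain ⟨y, hy⟩ := kFace_nonempty (gridCenter N z m) (hρ m) (sel m)
  exact (measure_closedBall_pos volume y hδ' |>.trans_le <|
    measure_mono (closedBall_subset_cthickening hy δ')).ne'

theorem volume_selFace_ne_top (z : Fin n → ℤ) {ρ : (Fin n → Fin N) → ℝ} (hρ : ∀ m, 0 ≤ ρ m)
    (sel : (Fin n → Fin N) → FaceIdx n k) (δ' : ℝ) (m : Fin n → Fin N) :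
    volume (selFace k N z ρ sel δ' m) ≠ ⊤ :=
  (isBounded_closedBall.subset (kFace_subset_closedBall _ (hρ m) _)).cthickening.measure_lt_top.ne

theorem selFace_subset_sevenCube (hN : 1 < N) (z : Fin n → ℤ) {ρ : (Fin n → Fin N) → ℝ}
    (hρ : inGamma N ρ) (sel : (Fin n → Fin N) → FaceIdx n k) (m : Fin n → Fin N) :
    selFace k N z ρ sel (N : ℝ)⁻¹ m ⊆ sevenCube z := by
  have hN' : (1 : ℝ) < N := by exact_mod_cast hN
  obtain ⟨⟨hρ1, hρ2⟩, -⟩ := hρ m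
  intro y hy j
  have hy_ball : dist y (gridCenter N z m) ≤ (N : ℝ)⁻¹ + ρ m := by
    have := cthickening_subset_of_subset (N : ℝ)⁻¹
      (kFace_subset_closedBall _ (by linarith) (sel m)) hy
    rwa [cthickening_closedBall (by positivity) (by linarith), mem_closedBall] at this
  have hyj : |y j - gridCenter N z m j| ≤ (N : ℝ)⁻¹ + ρ m :=
    (Real.dist_eq _ _ ▸ dist_le_pi_dist y _ j).trans hy_ball
  have hcenter : |gridCenter N z m j - ((z j : ℝ) + 1 / 2)| ≤ 1 / 2 := by
    have hmj : ((m j : ℕ) : ℝ) + 1 ≤ N := by exact_mod_cast (m j).2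
    have h0 : (0 : ℝ) ≤ ((m j : ℝ) + 1 / 2) / N := by positivity
    have h1 : ((m j : ℝ) + 1 / 2) / N ≤ 1 := (div_le_one (by linarith)).2 (by linarith)
    rw [abs_le]
    constructor <;> simp only [gridCenter] <;> linarith
  have hinv : (N : ℝ)⁻¹ ≤ 1 := inv_le_one_of_one_le₀ hN'.le
  calc |y j - ((z j : ℝ) + 1 / 2)|
      ≤ |y j - gridCenter N z m j| + |gridCenter N z m j - ((z j : ℝ) + 1 / 2)| :=
        abs_sub_le _ _ _
    _ ≤ 7 / 2 := by linarith

end Geometry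

section FaceCount

variable {n k N : ℕ}

/-- The fixed coordinate `j` of the face `F` of the cube with center `gridCenter N z m` and
radius `t / N`, in units of `1 / (2N)` relative to `z j`. -/
def faceLevel (m : Fin n → Fin N) (t : ℤ) (F : FaceIdx n k) (j : Fin n) : ℤ :=
  2 * (m j : ℤ) + 1 + if F.2 j then 2 * t else -(2 * t)

theorem two_mul_sub_eq_faceLevel (hN : (N : ℝ) ≠ 0) (z : Fin n → ℤ) (m : Fin n → Fin N)
    (t : ℤ) (F : FaceIdx n k) {y : Fin n → ℝ} (hy : y ∈ kFace k (gridCenter N z m) (t / N) F)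
    {j : Fin n} (hj : j ∉ F.1.1) :
    2 * N * (y j - z j) = faceLevel m t F j := by
  rw [hy.2 j hj, gridCenter, faceLevel]
  split <;> push_cast <;> field_simp <;> ring

theorem abs_sub_faceLevel_lt (hN : 0 < N) (z : Fin n → ℤ) (m : Fin n → Fin N) (t : ℤ)
    (F : FaceIdx n k) {y : Fin n → ℝ}
    (hy : y ∈ cthickening (N : ℝ)⁻¹ (kFace k (gridCenter N z m) (t / N) F))
    {j : Fin n} (hj : j ∉ F.1.1) :
    |2 * N * (y j - z j) - faceLevel m t F j| < 4 := by
  have hN' : (0 : ℝ) < N := by exact_mod_cast hN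
  obtain ⟨y', hy', hyy'⟩ := mem_thickening_iff.1 <|
    cthickening_subset_thickening' (δ₂ := 2 / N) (by positivity)
      (by rw [inv_eq_one_div]; gcongr; norm_num) _ hy
  have hyj : |y j - y' j| < 2 / N := (Real.dist_eq _ _ ▸ dist_le_pi_dist y y' j).trans_lt hyy'
  rw [← two_mul_sub_eq_faceLevel hN'.ne' z m t F hy' hj, ← mul_sub, sub_sub_sub_cancel_right,
    abs_mul, abs_of_pos (by positivity)]
  calc 2 * N * |y j - y' j| < 2 * N * (2 / N) := by gcongr
    _ = 4 := by field_simp; ring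

theorem sub_floor_mem_Icc_of_abs_sub_lt {x : ℝ} {s : ℤ} (h : |x - s| < 4) :
    s - ⌊x⌋ ∈ Finset.Icc (-4 : ℤ) 4 := by
  rw [abs_lt] at h
  have h₁ : s < ⌊x⌋ + 5 := by
    exact_mod_cast (by linarith [Int.lt_floor_add_one x] : (s : ℝ) < ⌊x⌋ + 5)
  have h₂ : ⌊x⌋ - 4 < s := by
    exact_mod_cast (by linarith [Int.floor_le x] : (⌊x⌋ : ℝ) - 4 < s)
  rw [Finset.mem_Icc]
  omega

theorem ncard_mem_selFace_le (hN : 0 < N) (z : Fin n → ℤ) {ρ : (Fin n → Fin N) → ℝ}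
    (hρ : ∀ m, ∃ t : ℤ, ρ m = t / N) (sel : (Fin n → Fin N) → FaceIdx n k) {B : ℕ}
    (hB : ∀ T : Finset (Fin n), T.card = k → ∀ a : Fin n → ℝ,
      {m : Fin n → Fin N |
        kFace k (gridCenter N z m) (ρ m) (sel m) ⊆ {y | ∀ j ∉ T, y j = a j}}.ncard ≤ B)
    (y : Fin n → ℝ) :
    {m | y ∈ selFace k N z ρ sel (N : ℝ)⁻¹ m}.ncard ≤ 18 ^ n * B := by
  classical
  have hN' : (0 : ℝ) < N := by exact_mod_cast hN
  choose t ht using hρ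
  set c : Fin n → ℝ := fun j => 2 * N * (y j - z j)
  let cls : (Fin n → Fin N) → Finset (Fin n) × (Fin n → ℤ) := fun m =>
    ((sel m).1.1, fun j => if j ∈ (sel m).1.1 then 0 else faceLevel m (t m) (sel m) j - ⌊c j⌋)
  rw [Set.ncard_eq_toFinset_card', Set.toFinset_ofPred]
  set S := Finset.univ.filter fun m => y ∈ selFace k N z ρ sel (N : ℝ)⁻¹ m
  have hmaps : ∀ m ∈ S, cls m ∈ (Finset.univ : Finset (Finset (Fin n))) ×ˢ
      Fintype.piFinset fun _ => Finset.Icc (-4 : ℤ) 4 := by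
    intro m hm
    have hm' : y ∈ cthickening (N : ℝ)⁻¹ (kFace k (gridCenter N z m) (t m / N) (sel m)) :=
      ht m ▸ (Finset.mem_filter.1 hm).2
    refine Finset.mem_product.2 ⟨Finset.mem_univ _, Fintype.mem_piFinset.2 fun j => ?_⟩
    by_cases hj : j ∈ (sel m).1.1
    · simp [cls, hj]
    · simp only [cls, if_neg hj]
      exact sub_floor_mem_Icc_of_abs_sub_lt (abs_sub_faceLevel_lt hN z m (t m) (sel m) hm' hj)
  have hfiber : ∀ b ∈ S.image cls, (S.filter fun m => cls m = b).card ≤ B := by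
    intro b hb
    obtain ⟨m₀, -, rfl⟩ := Finset.mem_image.1 hb
    refine (Set.ncard_coe_finset _).symm.trans_le <| (Set.ncard_le_ncard ?_).trans <|
      hB (sel m₀).1.1 (sel m₀).1.2 fun j => z j + (((cls m₀).2 j + ⌊c j⌋ : ℤ) : ℝ) / (2 * N)
    intro m hm y' hy' j hj
    have hcls := (Finset.mem_filter.1 hm).2
    have hT : (sel m).1.1 = (sel m₀).1.1 := congrArg Prod.fst hcls
    have hlevel := congrFun (congrArg Prod.snd hcls) j
    simp only [cls, hT, if_neg hj] at hlevel ⊢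
    have hy'j := two_mul_sub_eq_faceLevel hN'.ne' z m (t m) (sel m) (ht m ▸ hy') (hT ▸ hj)
    rw [← hlevel, sub_add_cancel, ← hy'j]
    field_simp
    ring
  calc S.card ≤ B * (S.image cls).card := Finset.card_le_mul_card_image S B hfiber
    _ ≤ B * ((Finset.univ : Finset (Finset (Fin n))) ×ˢ
          Fintype.piFinset fun _ : Fin n => Finset.Icc (-4 : ℤ) 4).card := by
        gcongr
        exact Finset.image_subset_iff.2 hmaps
    _ = 18 ^ n * B := by
        simp [Finset.card_product, Fintype.card_piFinset, mul_comm, ← mul_pow]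

end FaceCount

section WeightedBound

variable {n k N : ℕ}

theorem le_ApLoc (z : Fin n → ℤ) (ρ : (Fin n → Fin N) → ℝ) (sel : (Fin n → Fin N) → FaceIdx n k)
    (w : (Fin n → ℝ) → ℝ) (p : ℝ) (m : Fin n → Fin N) :
    ((volume (selFace k N z ρ sel (N : ℝ)⁻¹ m))⁻¹ *
        ∫⁻ y in gridCell N z m, ENNReal.ofReal (w y)) *
      ((volume (selFace k N z ρ sel (N : ℝ)⁻¹ m))⁻¹ *
        ∫⁻ y in selFace k N z ρ sel (N : ℝ)⁻¹ m, ENNReal.ofReal (w y) ^ (1 - p / (p - 1))) ^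
          (p - 1) ≤ ApLoc k N z ρ sel w p :=
  le_iSup (fun m => ((volume (selFace k N z ρ sel (N : ℝ)⁻¹ m))⁻¹ *
        ∫⁻ y in gridCell N z m, ENNReal.ofReal (w y)) *
      ((volume (selFace k N z ρ sel (N : ℝ)⁻¹ m))⁻¹ *
        ∫⁻ y in selFace k N z ρ sel (N : ℝ)⁻¹ m, ENNReal.ofReal (w y) ^ (1 - p / (p - 1))) ^
          (p - 1)) m

theorem lintegral_linMax_rpow_le {p : ℝ} (hp : 1 < p) (hN : 1 < N) (z : Fin n → ℤ)
    {ρ : (Fin n → Fin N) → ℝ} (hρ : inGamma N ρ) (sel : (Fin n → Fin N) → FaceIdx n k)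
    {w : (Fin n → ℝ) → ℝ} (hw : AEMeasurable w) (hAp : ApLoc k N z ρ sel w p ≠ ⊤) {K : ℕ}
    (hK : ∀ x, {m | x ∈ selFace k N z ρ sel (N : ℝ)⁻¹ m}.ncard ≤ K) (f : (Fin n → ℝ) → ℝ) :
    ∫⁻ x, ‖linMax k N z ρ sel (N : ℝ)⁻¹ f x‖ₑ ^ p ∂(wMeasure w).restrict (unitCube z) ≤
      ApLoc k N z ρ sel w p * K * ∫⁻ x, ‖f x‖ₑ ^ p ∂(wMeasure w).restrict (sevenCube z) := by
  set ℓ := selFace k N z ρ sel (N : ℝ)⁻¹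
  set μ₇ := (wMeasure w).restrict (sevenCube z)
  have hρ₀ : ∀ m, 0 ≤ ρ m := fun m => zero_le_one.trans (hρ m).1.1
  have hδ : (0 : ℝ) < (N : ℝ)⁻¹ := by positivity
  have hW : AEMeasurable fun x => ENNReal.ofReal (w x) := hw.ennreal_ofReal
  have hcell : ∀ m, ‖(volume (ℓ m)).toReal⁻¹ * ∫ y in ℓ m, f y‖ₑ ^ p *
      ∫⁻ y in gridCell N z m, ENNReal.ofReal (w y) ≤
        ApLoc k N z ρ sel w p * ∫⁻ y in ℓ m, ‖f y‖ₑ ^ p ∂μ₇ := by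
    intro m
    calc _ ≤ _ := enorm_setAverage_rpow_mul_le hp (volume_selFace_ne_zero z hρ₀ sel hδ m)
          (volume_selFace_ne_top z hρ₀ sel _ m) hW.restrict
          (ae_of_all _ fun _ => ENNReal.ofReal_ne_top) f
          (ne_top_of_le_ne_top hAp (le_ApLoc z ρ sel w p m))
      _ ≤ ApLoc k N z ρ sel w p * ∫⁻ y in ℓ m, ‖f y‖ₑ ^ p * ENNReal.ofReal (w y) := by
        gcongr
        exact le_ApLoc z ρ sel w p m
      _ = ApLoc k N z ρ sel w p * ∫⁻ y in ℓ m, ‖f y‖ₑ ^ p ∂μ₇ := by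
        rw [Measure.restrict_restrict_of_subset (selFace_subset_sevenCube hN z hρ sel m), wMeasure,
          setLIntegral_withDensity_eq_setLIntegral_mul_non_measurable₀ _ hW.restrict _
            (measurableSet_selFace z ρ sel _ m) (ae_of_all _ fun _ => ENNReal.ofReal_lt_top)]
        simp only [Pi.mul_apply, mul_comm]
        rfl
  calc ∫⁻ x, ‖linMax k N z ρ sel (N : ℝ)⁻¹ f x‖ₑ ^ p ∂(wMeasure w).restrict (unitCube z)
      ≤ ∫⁻ x, ‖linMax k N z ρ sel (N : ℝ)⁻¹ f x‖ₑ ^ p ∂wMeasure w :=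
        lintegral_mono' Measure.restrict_le_self le_rfl
    _ = ∑ m, ‖(volume (ℓ m)).toReal⁻¹ * ∫ y in ℓ m, f y‖ₑ ^ p *
          ∫⁻ y in gridCell N z m, ENNReal.ofReal (w y) := by
        unfold linMax
        rw [lintegral_enorm_rpow_sum_indicator_const (by linarith)
          (measurableSet_gridCell z) (pairwise_disjoint_gridCell z)]
        simp_rw [wMeasure, withDensity_apply _ (measurableSet_gridCell z _)]
        rfl
    _ ≤ ∑ m, ApLoc k N z ρ sel w p * ∫⁻ y in ℓ m, ‖f y‖ₑ ^ p ∂μ₇ :=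
        Finset.sum_le_sum fun m _ => hcell m
    _ ≤ ApLoc k N z ρ sel w p * (K * ∫⁻ x, ‖f x‖ₑ ^ p ∂μ₇) := by
        rw [← Finset.mul_sum]
        gcongr
        exact sum_setLIntegral_le_mul_lintegral_of_ncard_le (measurableSet_selFace z ρ sel _) hK _
    _ = _ := (mul_assoc _ _ _).symm

theorem eLpNorm_linMax_le {p : ℝ} (hp : 1 < p) (hN : 1 < N) (z : Fin n → ℤ)
    {ρ : (Fin n → Fin N) → ℝ} (hρ : inGamma N ρ) (sel : (Fin n → Fin N) → FaceIdx n k)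
    {w : (Fin n → ℝ) → ℝ} (hw : AEMeasurable w) (hAp : ApLoc k N z ρ sel w p ≠ ⊤) {K : ℕ}
    (hK : ∀ x, {m | x ∈ selFace k N z ρ sel (N : ℝ)⁻¹ m}.ncard ≤ K) (f : (Fin n → ℝ) → ℝ) :
    eLpNorm (linMax k N z ρ sel (N : ℝ)⁻¹ f) (ENNReal.ofReal p)
        ((wMeasure w).restrict (unitCube z)) ≤
      (K : ℝ≥0∞) ^ (1 / p) * ApLoc k N z ρ sel w p ^ (1 / p) *
        eLpNorm f (ENNReal.ofReal p) ((wMeasure w).restrict (sevenCube z)) := by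
  have hp₀ : 0 < p := by linarith
  rw [eLpNorm_eq_lintegral_rpow_enorm_toReal (by simpa using hp₀) ENNReal.ofReal_ne_top,
    eLpNorm_eq_lintegral_rpow_enorm_toReal (by simpa using hp₀) ENNReal.ofReal_ne_top,
    ENNReal.toReal_ofReal hp₀.le, mul_comm ((K : ℝ≥0∞) ^ _), ← ENNReal.mul_rpow_of_nonneg _ _
      (by positivity), ← ENNReal.mul_rpow_of_nonneg _ _ (by positivity)]
  exact ENNReal.rpow_le_rpow (lintegral_linMax_rpow_le hp hN z hρ sel hw hAp hK f) (by positivity)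

end WeightedBound

theorem rpow_natCast_rpow_one_sub_div_eq {N : ℝ} (hN : 0 < N) {n : ℕ} (hn : n ≠ 0) (b : ℝ) :
    (N ^ (n : ℝ)) ^ (1 - b / (2 * n ^ 2)) = N⁻¹ ^ (b / (2 * n) - n) := by
  rw [← Real.rpow_mul hN.le, Real.inv_rpow hN.le, ← Real.rpow_neg hN.le]
  congr 1
  field_simp
  ring

theorem natCast_mul_floor_rpow_le {N : ℝ} (hN : 0 < N) {n : ℕ} (hn : n ≠ 0) {p : ℝ} (hp : 0 < p)
    {A : ℝ} (hA : 0 ≤ A) (c : ℕ) (b : ℝ) :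
    ((c * ⌊A * (N ^ (n : ℝ)) ^ (1 - b / (2 * n ^ 2))⌋₊ : ℕ) : ℝ≥0∞) ^ (1 / p) ≤
      ENNReal.ofReal ((c * A) ^ (1 / p) * N⁻¹ ^ (1 / p * (b / (2 * n) - n))) := by
  have hfloor := Nat.floor_le (by positivity : 0 ≤ A * (N ^ (n : ℝ)) ^ (1 - b / (2 * n ^ 2)))
  rw [mul_comm (1 / p), Real.rpow_mul (by positivity), ← rpow_natCast_rpow_one_sub_div_eq hN hn,
    ← Real.mul_rpow (by positivity) (by positivity),
    ← ENNReal.ofReal_rpow_of_nonneg (by positivity) (by positivity : (0 : ℝ) ≤ 1 / p),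
    ← ENNReal.ofReal_natCast]
  gcongr
  push_cast
  rw [mul_assoc]
  gcongr

theorem sufficient_local_k_general (n k : ℕ) (hkn : k < n) (p : ℝ) (hp : 1 < p)
    (A : ℝ) (hA : 0 < A) :
    ∃ C : ℝ, 0 < C ∧
      ∀ (N : ℕ), 1 < N → ∀ (δ : ℝ), δ = (N : ℝ)⁻¹ →
      ∀ (z : Fin n → ℤ) (ρ : (Fin n → Fin N) → ℝ), inGamma N ρ →
      ∀ sel : (Fin n → Fin N) → FaceIdx n k,
      (∀ T : Finset (Fin n), T.card = k → ∀ a : Fin n → ℝ,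
        ({m : Fin n → Fin N |
            kFace k (gridCenter N z m) (ρ m) (sel m) ⊆ {y | ∀ j ∉ T, y j = a j}}.ncard : ℝ) ≤
          A * ((N : ℝ) ^ (n : ℝ)) ^ (1 - ((n : ℝ) - k) * (2 * n - 1) / (2 * n ^ 2))) →
      ∀ w : (Fin n → ℝ) → ℝ, (∀ x, 0 ≤ w x) → LocallyIntegrable w volume →
      ApLoc k N z ρ sel w p ≠ ⊤ →
      ∀ f : (Fin n → ℝ) → ℝ,
        eLpNorm (linMax k N z ρ sel δ f) (ENNReal.ofReal p)
            ((wMeasure w).restrict (unitCube z)) ≤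
          ENNReal.ofReal
              (C * δ ^ ((1 / p) * (((n : ℝ) - k) * (2 * n - 1) / (2 * n) - n))) *
            ApLoc k N z ρ sel w p ^ (1 / p) *
            eLpNorm f (ENNReal.ofReal p) ((wMeasure w).restrict (sevenCube z)) := by
  have hp₀ : 0 < p := by linarith
  refine ⟨(((18 ^ n : ℕ) : ℝ) * A) ^ (1 / p), by positivity, ?_⟩
  rintro N hN δ rfl z ρ hρ sel hsel w - hw hAp f
  have hK := ncard_mem_selFace_le (by omega : 0 < N) z (fun m => (hρ m).2) sel
    (fun T hT a => Nat.le_floor (hsel T hT a))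
  refine (eLpNorm_linMax_le hp hN z hρ sel hw.aestronglyMeasurable.aemeasurable hAp hK f).trans ?_
  gcongr
  exact natCast_mul_floor_rpow_le (by positivity) (by omega) hp₀ hA.le _ _

/-- local weighted bound for the linearized `k`-skeleton maximal operator
in `ℝⁿ`: for `p' ∈ ℕ` and a face selection satisfying the `k`-plane count property,
`‖M̃^k_{ρ,δ} f‖_{L^p(Q_z,w)} ≤ C(k,n) δ^{(1/p)((n-k)(2n-1)/(2n) - n)}
[w]_{A^{S_k}_{p,ρ,z}}^{1/p} ‖f‖_{L^p(7Q_z,w)}`. -/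
theorem sufficient_local_k (n k : ℕ) (hkn : k < n) (p : ℝ) (hp : 1 < p)
    (hp' : ∃ m : ℕ, p / (p - 1) = (m : ℝ)) (A : ℝ) (hA : 0 < A) :
    ∃ C : ℝ, 0 < C ∧
      ∀ (N : ℕ), 1 < N → ∀ (δ : ℝ), δ = (N : ℝ)⁻¹ →
      ∀ (z : Fin n → ℤ) (ρ : (Fin n → Fin N) → ℝ), inGamma N ρ →
      ∀ sel : (Fin n → Fin N) → FaceIdx n k,
      (∀ T : Finset (Fin n), T.card = k → ∀ a : Fin n → ℝ,
        ({m : Fin n → Fin N |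
            kFace k (gridCenter N z m) (ρ m) (sel m) ⊆ {y | ∀ j ∉ T, y j = a j}}.ncard : ℝ) ≤
          A * ((N : ℝ) ^ (n : ℝ)) ^ (1 - ((n : ℝ) - k) * (2 * n - 1) / (2 * n ^ 2))) →
      ∀ w : (Fin n → ℝ) → ℝ, (∀ x, 0 ≤ w x) → LocallyIntegrable w volume →
      ApLoc k N z ρ sel w p ≠ ⊤ →
      ∀ f : (Fin n → ℝ) → ℝ,
        eLpNorm (linMax k N z ρ sel δ f) (ENNReal.ofReal p)
            ((wMeasure w).restrict (unitCube z)) ≤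
          ENNReal.ofReal
              (C * δ ^ ((1 / p) * (((n : ℝ) - k) * (2 * n - 1) / (2 * n) - n))) *
            ApLoc k N z ρ sel w p ^ (1 / p) *
            eLpNorm f (ENNReal.ofReal p) ((wMeasure w).restrict (sevenCube z)) :=
  sufficient_local_k_general n k hkn p hp A hA

end
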